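/- Every automorphism of the complex 2-step nilpotent commutative algebra A₀₁ (3-dimensional, with the single nonzero product e₁∘e₁ = e₂) has matrix of the form [[a₁₁,0,0],[a₂₁,a₁₁²,a₂₃],[a₃₁,0,a₃₃]] with respect to the basis e₁,e₂,e₃ (with a₁₁a₃₃ ≠ 0), and conversely every such invertible matrix defines an automorphism. -/

import Mathlib

/-! Since `x ∘ y = x₀ y₀ e₂`, a linear map `φ` is multiplicative exactly when `φ e₂ = a² e₂` and
the `e₁`-coordinate of `φ x` is `a x₀`, where `a` is the `e₁`-coordinate of `φ e₁`; given the
first condition, the second only asks that `φ e₃` have no `e₁`-component. The matrix of such a `φ`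
has determinant `a³ a₃₃`, so it is invertible exactly when `a a₃₃ ≠ 0`. -/

/-- The commutative algebra A₀₁ : e₁∘e₁ = e₂. -/
def mulA01 (x y : Fin 3 → ℂ) : Fin 3 → ℂ :=
  ![0, x 0 * y 0, 0]

local notation "e₁" => ![(1 : ℂ), 0, 0]
local notation "e₂" => ![(0 : ℂ), 1, 0]
local notation "e₃" => ![(0 : ℂ), 0, 1]

lemma eq_coord_smul_add (v : Fin 3 → ℂ) : v = v 0 • e₁ + v 1 • e₂ + v 2 • e₃ := by
  ext i; fin_cases i <;> simp

lemma pi_single_fin_three :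
    Pi.single 0 1 = e₁ ∧ Pi.single 1 1 = e₂ ∧ Pi.single 2 1 = e₃ := by
  refine ⟨?_, ?_, ?_⟩ <;> ext i <;> fin_cases i <;> rfl

lemma mulA01_eq_smul (x y : Fin 3 → ℂ) : mulA01 x y = (x 0 * y 0) • e₂ := by
  ext i; fin_cases i <;> simp [mulA01]

section

variable (φ : (Fin 3 → ℂ) →ₗ[ℂ] (Fin 3 → ℂ))

lemma apply_zero_eq_mul (h₂ : φ e₂ 0 = 0) (h₃ : φ e₃ 0 = 0) (x : Fin 3 → ℂ) :
    φ x 0 = x 0 * φ e₁ 0 := by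
  conv_lhs => rw [eq_coord_smul_add x]
  simp only [map_add, map_smul, Pi.add_apply, Pi.smul_apply, smul_eq_mul, h₂, h₃]
  ring

theorem map_mulA01_iff :
    (∀ x y, φ (mulA01 x y) = mulA01 (φ x) (φ y)) ↔
      φ e₂ = φ e₁ 0 ^ 2 • e₂ ∧ φ e₃ 0 = 0 := by
  refine ⟨fun hmul ↦ ⟨?_, ?_⟩, fun ⟨h₂, h₃⟩ x y ↦ ?_⟩
  · simpa [mulA01_eq_smul, sq] using hmul e₁ e₁
  · simpa [mulA01_eq_smul] using (congrFun (hmul e₃ e₃) 1).symm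
  · have h₂₀ : φ e₂ 0 = 0 := by simp [h₂]
    rw [mulA01_eq_smul, mulA01_eq_smul, map_smul, h₂, smul_smul,
      apply_zero_eq_mul φ h₂₀ h₃ x, apply_zero_eq_mul φ h₂₀ h₃ y]
    congr 1
    ring

theorem det_eq_of_map_mulA01 (h₂ : φ e₂ = φ e₁ 0 ^ 2 • e₂) (h₃ : φ e₃ 0 = 0) :
    LinearMap.det φ = φ e₁ 0 ^ 3 * φ e₃ 2 := by
  obtain ⟨hs₁, hs₂, hs₃⟩ := pi_single_fin_three
  rw [← LinearMap.det_toMatrix', Matrix.det_fin_three]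
  simp only [LinearMap.toMatrix'_apply, hs₁, hs₂, hs₃, h₂, h₃, Pi.smul_apply, smul_eq_mul,
    Matrix.cons_val_zero, Matrix.cons_val_one, Matrix.cons_val_two, Matrix.head_cons,
    Matrix.tail_cons]
  ring

theorem bijective_iff_of_map_mulA01 (h₂ : φ e₂ = φ e₁ 0 ^ 2 • e₂) (h₃ : φ e₃ 0 = 0) :
    Function.Bijective φ ↔ φ e₁ 0 * φ e₃ 2 ≠ 0 := by
  rw [← Module.End.isUnit_iff, LinearMap.isUnit_iff_isUnit_det, isUnit_iff_ne_zero,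
    det_eq_of_map_mulA01 φ h₂ h₃]
  simp

end

theorem stmt_16 (φ : (Fin 3 → ℂ) →ₗ[ℂ] (Fin 3 → ℂ)) :
    (Function.Bijective φ ∧
      ∀ x y : Fin 3 → ℂ, φ (mulA01 x y) = mulA01 (φ x) (φ y)) ↔
    (∃ a11 a21 a31 a23 a33 : ℂ, a11 * a33 ≠ 0 ∧
      φ ![1, 0, 0] = a11 • ![(1 : ℂ), 0, 0] + a21 • ![(0 : ℂ), 1, 0] + a31 • ![(0 : ℂ), 0, 1] ∧
      φ ![0, 1, 0] = a11 ^ 2 • ![(0 : ℂ), 1, 0] ∧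
      φ ![0, 0, 1] = a23 • ![(0 : ℂ), 1, 0] + a33 • ![(0 : ℂ), 0, 1]) := by
  rw [map_mulA01_iff]
  constructor
  · rintro ⟨hbij, h₂, h₃⟩
    refine ⟨φ e₁ 0, φ e₁ 1, φ e₁ 2, φ e₃ 1, φ e₃ 2, (bijective_iff_of_map_mulA01 φ h₂ h₃).mp hbij,
      eq_coord_smul_add _, h₂, ?_⟩
    conv_lhs => rw [eq_coord_smul_add (φ e₃), h₃, zero_smul, zero_add]
  · rintro ⟨a₁₁, a₂₁, a₃₁, a₂₃, a₃₃, hne, h₁, h₂, h₃⟩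
    have ha₁₁ : φ e₁ 0 = a₁₁ := by simp [h₁]
    have h₃₀ : φ e₃ 0 = 0 := by simp [h₃]
    have ha₃₃ : φ e₃ 2 = a₃₃ := by simp [h₃]
    rw [← ha₁₁] at h₂
    refine ⟨(bijective_iff_of_map_mulA01 φ h₂ h₃₀).mpr ?_, h₂, h₃₀⟩
    rwa [ha₁₁, ha₃₃]
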